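/- arXiv:1507.05914 — 5 statements merged into one kernel-verified Lean document; each statement's English description precedes it below -/
import Mathlib

section
/- The origin x = 0 is a global minimizer of f(x) = h(√(xᵀQx)) − μᵀx over the simplex S = {x ≥ 0 : 1ᵀx ≤ 1} if and only if there exists v in the closed unit ball B of ℝⁿ such that h'(0)·Q^{1/2}v − μ ≥ 0 componentwise. -/
/-!
Write `A = Q^{1/2}`, so that `f x = h ‖A x‖ - ⟪μ, x⟫`. Both sides are equivalent to
`⟪μ, x⟫ ≤ h'(0) ‖A x‖` for all `x ≥ 0`. Minimality of `0` gives this by the one-sided first-order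
condition along the rays `t ↦ t • x`; conversely it yields minimality through the tangent line
`h 0 + h'(0) s ≤ h s` of the convex `h`, since `h'(0) ≥ 0` by monotonicity.

The ball condition says that the compact convex set `h'(0) • A(B) - μ` meets the self-dual closed
cone `ℝⁿ₊`. By Hahn–Banach this holds iff every `x ≥ 0` pairs nonnegatively with some point of the
set, and the best point, `v = A x / ‖A x‖`, gives the pairing `h'(0) ‖A x‖ - ⟪μ, x⟫`.
-/

open Matrix Set Filter Topology
open scoped RealInnerProductSpace

theorem HasDerivWithinAt.nonneg_of_isLocalMinOn_Ici {g : ℝ → ℝ} {g' a : ℝ}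
    (hg : HasDerivWithinAt g g' (Ici a) a) (hmin : IsLocalMinOn g (Ici a) a) : 0 ≤ g' := by
  have hdir : (1 : ℝ) ∈ posTangentConeAt (Ici a) a :=
    mem_posTangentConeAt_of_segment_subset
      ((segment_eq_Icc (by simp)).trans_subset Icc_subset_Ici_self)
  simpa using hmin.hasFDerivWithinAt_nonneg hg.hasFDerivWithinAt hdir

theorem HasDerivWithinAt.le_mul_of_eventually_le_sub {g : ℝ → ℝ} {g' b c : ℝ}
    (hg : HasDerivWithinAt g g' (Ici 0) 0) (hb : 0 ≤ b)
    (hmin : ∀ᶠ t in 𝓝[≥] 0, g 0 ≤ g (t * b) - t * c) : c ≤ g' * b := by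
  have hray : HasDerivWithinAt (fun t => g (t * b) - t * c) (g' * b - c) (Ici 0) 0 := by
    have hcomp := HasDerivWithinAt.comp_of_eq (0 : ℝ) hg (hasDerivAt_mul_const b).hasDerivWithinAt
      (fun t (ht : 0 ≤ t) => mul_nonneg ht hb) (zero_mul b).symm
    exact hcomp.sub (hasDerivAt_mul_const c).hasDerivWithinAt
  have := hray.nonneg_of_isLocalMinOn_Ici (by simpa [IsLocalMinOn, IsMinFilter] using hmin)
  linarith

theorem ConvexOn.add_mul_sub_le_of_hasDerivWithinAt {S : Set ℝ} {f : ℝ → ℝ} {f' x y : ℝ}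
    (hf : ConvexOn ℝ S f) (hx : x ∈ S) (hy : y ∈ S) (hxy : x ≤ y)
    (hf' : HasDerivWithinAt f f' S x) : f x + f' * (y - x) ≤ f y := by
  rcases hxy.eq_or_lt with rfl | hlt
  · simp
  have := hf.le_slope_of_hasDerivWithinAt hx hy hlt hf'
  rw [slope_def_field, le_div_iff₀ (sub_pos.mpr hlt)] at this
  linarith

theorem ProperCone.exists_mem_of_forall_innerDual {F : Type*} [NormedAddCommGroup F]
    [InnerProductSpace ℝ F] [CompleteSpace F] {C : ProperCone ℝ F} {K : Set F}
    (hK : Convex ℝ K) (hKc : IsCompact K)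
    (h : ∀ x ∈ innerDual (C : Set F), ∃ y ∈ K, 0 ≤ ⟪x, y⟫) : ∃ y ∈ K, y ∈ C := by
  by_contra! hdisj
  obtain ⟨φ, u, w, hφK, huw, hφC⟩ := geometric_hahn_banach_compact_closed hK hKc C.convex
    C.isClosed (disjoint_left.mpr hdisj)
  set x := (InnerProductSpace.toDual ℝ F).symm φ
  have hφ : ∀ y, φ y = ⟪x, y⟫ := fun y => InnerProductSpace.toDual_symm_apply.symm
  have hw : w < 0 := by simpa using hφC 0 C.zero_mem
  -- `φ` is bounded below by `w` on the cone, hence nonnegative there.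
  have hx : x ∈ innerDual (C : Set F) := by
    rw [mem_innerDual]
    intro c hc
    by_contra! hneg
    rw [real_inner_comm] at hneg
    have := hφC _ (C.smul_mem hc (div_pos_of_neg_of_neg hw hneg).le)
    rw [hφ, inner_smul_right, div_mul_cancel₀ _ hneg.ne] at this
    exact this.false
  obtain ⟨y, hyK, hy⟩ := h x hx
  linarith [hφK y hyK, hφ y]

theorem exists_norm_le_one_smul_sub_mem_iff {E F : Type*} [NormedAddCommGroup E]
    [InnerProductSpace ℝ E] [FiniteDimensional ℝ E] [NormedAddCommGroup F]
    [InnerProductSpace ℝ F] [FiniteDimensional ℝ F] (A : E →ₗ[ℝ] F)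
    (C : ProperCone ℝ F) (μ : F) {c : ℝ} (hc : 0 ≤ c) :
    (∃ v, ‖v‖ ≤ 1 ∧ c • A v - μ ∈ C) ↔
      ∀ x ∈ ProperCone.innerDual (C : Set F), ⟪μ, x⟫ ≤ c * ‖A.adjoint x‖ := by
  constructor
  · rintro ⟨v, hv, hvC⟩ x hx
    have hpos : 0 ≤ ⟪c • A v - μ, x⟫ := hx hvC
    have hAv : ⟪A v, x⟫ ≤ ‖A.adjoint x‖ := calc
      ⟪A v, x⟫ = ⟪v, A.adjoint x⟫ := (LinearMap.adjoint_inner_right A v x).symm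
      _ ≤ ‖v‖ * ‖A.adjoint x‖ := real_inner_le_norm _ _
      _ ≤ ‖A.adjoint x‖ := mul_le_of_le_one_left (norm_nonneg _) hv
    rw [inner_sub_left, real_inner_smul_left] at hpos
    nlinarith [mul_le_mul_of_nonneg_left hAv hc]
  · intro h
    have hK : Convex ℝ ((fun v => c • A v - μ) '' Metric.closedBall 0 1) := by
      have := ((convex_closedBall (0 : E) 1).linear_image (c • A)).translate (-μ)
      simpa only [image_image, neg_add_eq_sub, LinearMap.smul_apply] using this
    have hKc : IsCompact ((fun v => c • A v - μ) '' Metric.closedBall 0 1) :=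
      (isCompact_closedBall 0 1).image
        ((continuous_const.smul A.continuous_of_finiteDimensional).sub continuous_const)
    obtain ⟨-, ⟨v, hv, rfl⟩, hvC⟩ := ProperCone.exists_mem_of_forall_innerDual (C := C) hK hKc (by
      intro x hx
      have hnorm : ‖‖A.adjoint x‖⁻¹ • A.adjoint x‖ ≤ 1 := by
        rw [norm_smul, norm_inv, norm_norm]
        exact inv_mul_le_one_of_le₀ le_rfl (norm_nonneg _)
      have hAx : ⟪x, A (‖A.adjoint x‖⁻¹ • A.adjoint x)⟫ = ‖A.adjoint x‖ := by
        rw [map_smul, real_inner_smul_right, ← LinearMap.adjoint_inner_left,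
          real_inner_self_eq_norm_sq, sq, ← mul_assoc, inv_mul_mul_self]
      refine ⟨_, ⟨_, mem_closedBall_zero_iff.mpr hnorm, rfl⟩, ?_⟩
      rw [inner_sub_right, real_inner_smul_right, hAx, real_inner_comm]
      linarith [h x hx])
    exact ⟨v, mem_closedBall_zero_iff.mp hv, hvC⟩

section Euclidean

variable (ι : Type*) [Fintype ι] [DecidableEq ι]

noncomputable def nonnegOrthant : ProperCone ℝ (EuclideanSpace ℝ ι) :=
  ProperCone.innerDual (range fun i => EuclideanSpace.single i 1)

variable {ι}

theorem mem_nonnegOrthant {x : EuclideanSpace ℝ ι} : x ∈ nonnegOrthant ι ↔ ∀ i, 0 ≤ x i := by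
  simp [nonnegOrthant, EuclideanSpace.inner_single_left]

theorem innerDual_nonnegOrthant :
    ProperCone.innerDual (nonnegOrthant ι : Set (EuclideanSpace ℝ ι)) = nonnegOrthant ι := by
  ext x
  simp only [ProperCone.mem_innerDual, SetLike.mem_coe, mem_nonnegOrthant]
  refine ⟨fun hx i => ?_, fun hx y hy => ?_⟩
  · simpa [EuclideanSpace.inner_single_left] using
      hx (x := EuclideanSpace.single i 1) fun j => by
        rw [PiLp.single_apply]; split_ifs <;> norm_num
  · rw [PiLp.inner_apply]
    exact Finset.sum_nonneg fun i _ => mul_nonneg (hx i) (hy i)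

theorem Matrix.IsSymm.adjoint_toEuclideanLin {A : Matrix ι ι ℝ} (hA : A.IsSymm) :
    (toEuclideanLin A).adjoint = toEuclideanLin A := by
  rw [← toEuclideanLin_conjTranspose_eq_adjoint, conjTranspose_eq_transpose_of_trivial, hA.eq]

theorem Matrix.dotProduct_transpose_mul_mulVec_self (A : Matrix ι ι ℝ) (x : EuclideanSpace ℝ ι) :
    x ⬝ᵥ (Aᵀ * A) *ᵥ x = ‖toEuclideanLin A x‖ ^ 2 := by
  rw [← real_inner_self_eq_norm_sq, ← mulVec_mulVec, dotProduct_mulVec, vecMul_transpose]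
  rfl

end Euclidean

theorem stmt_2_general (n : ℕ) (Q Qhalf : Matrix (Fin n) (Fin n) ℝ) (μ : EuclideanSpace ℝ (Fin n))
    (h : ℝ → ℝ) (h'0 : ℝ)
    (hQhsym : Qhalf.IsSymm) (hQh : Qhalf * Qhalf = Q)
    (hconv : ConvexOn ℝ (Set.Ici (0:ℝ)) h)
    (hmono : MonotoneOn h (Set.Ici (0:ℝ)))
    (hd0 : HasDerivWithinAt h h'0 (Set.Ici (0:ℝ)) 0)
    (S : Set (EuclideanSpace ℝ (Fin n)))
    (hS : S = {x | (∑ i, x i) ≤ 1 ∧ ∀ i, 0 ≤ x i})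
    (f : EuclideanSpace ℝ (Fin n) → ℝ)
    (hf : ∀ x, f x = h (Real.sqrt (x ⬝ᵥ Q.mulVec x)) - μ ⬝ᵥ x) :
    (∀ x ∈ S, f 0 ≤ f x) ↔
    ∃ v : EuclideanSpace ℝ (Fin n), ‖v‖ ≤ 1 ∧
      ∀ i, 0 ≤ h'0 * (Qhalf.mulVec v) i - μ i := by
  set A := toEuclideanLin Qhalf
  have hQ : Q = Qhalfᵀ * Qhalf := by rw [hQhsym.eq, hQh]
  have hfA : ∀ x, f x = h ‖A x‖ - ⟪μ, x⟫ := fun x => by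
    rw [hf, hQ, dotProduct_transpose_mul_mulVec_self, Real.sqrt_sq (norm_nonneg _),
      real_inner_comm]
    rfl
  have hh'0 : 0 ≤ h'0 :=
    hd0.nonneg_of_isLocalMinOn_Ici (IsMinOn.localize fun t ht => hmono self_mem_Ici ht ht)
  have hball : (∃ v : EuclideanSpace ℝ (Fin n), ‖v‖ ≤ 1 ∧
      ∀ i, 0 ≤ h'0 * (Qhalf.mulVec v) i - μ i) ↔
      ∃ v, ‖v‖ ≤ 1 ∧ h'0 • A v - μ ∈ nonnegOrthant (Fin n) := by
    simp [mem_nonnegOrthant, A]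
  rw [hball, exists_norm_le_one_smul_sub_mem_iff A _ μ hh'0, innerDual_nonnegOrthant,
    hQhsym.adjoint_toEuclideanLin, hS]
  simp only [mem_nonnegOrthant, mem_ofPred_eq, hfA, map_zero, norm_zero, inner_zero_right,
    sub_zero]
  constructor
  · intro hmin x hx
    have hsmall : ∀ᶠ t in 𝓝[≥] (0 : ℝ), t * ∑ i, x i < 1 :=
      (((continuous_id.mul continuous_const).tendsto' 0 0 (zero_mul _)).mono_left
        nhdsWithin_le_nhds).eventually_lt_const one_pos
    refine hd0.le_mul_of_eventually_le_sub (norm_nonneg _) ?_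
    filter_upwards [self_mem_nhdsWithin, hsmall] with t (ht : 0 ≤ t) hts
    simpa [norm_smul, abs_of_nonneg ht, real_inner_smul_right] using
      hmin (t • x) ⟨by simpa [← Finset.mul_sum] using hts.le, fun i => mul_nonneg ht (hx i)⟩
  · rintro hkey x ⟨-, hx⟩
    have := hconv.add_mul_sub_le_of_hasDerivWithinAt self_mem_Ici (norm_nonneg (A x))
      (norm_nonneg _) hd0
    linarith [hkey x hx]

/-- `0` is a global minimizer of `f` over the simplex `S` iff
there is `v` in the closed unit ball with `h'(0)·Q^{1/2}v − μ ≥ 0` componentwise. -/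
theorem stmt_2 (n : ℕ) (Q Qhalf : Matrix (Fin n) (Fin n) ℝ) (μ : EuclideanSpace ℝ (Fin n))
    (h : ℝ → ℝ) (h'0 : ℝ)
    (hQpd : Q.PosDef) (hQhsym : Qhalf.IsSymm) (hQh : Qhalf * Qhalf = Q)
    (hconv : ConvexOn ℝ (Set.Ici (0:ℝ)) h)
    (hmono : MonotoneOn h (Set.Ici (0:ℝ)))
    (hdiff : ∀ t : ℝ, 0 < t → DifferentiableAt ℝ h t)
    (hd0 : HasDerivWithinAt h h'0 (Set.Ici (0:ℝ)) 0)
    (S : Set (EuclideanSpace ℝ (Fin n)))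
    (hS : S = {x | (∑ i, x i) ≤ 1 ∧ ∀ i, 0 ≤ x i})
    (f : EuclideanSpace ℝ (Fin n) → ℝ)
    (hf : ∀ x, f x = h (Real.sqrt (x ⬝ᵥ Q.mulVec x)) - μ ⬝ᵥ x)
    (hfconv : ConvexOn ℝ S f) :
    (∀ x ∈ S, f 0 ≤ f x) ↔
    ∃ v : EuclideanSpace ℝ (Fin n), ‖v‖ ≤ 1 ∧
      ∀ i, 0 ≤ h'0 * (Qhalf.mulVec v) i - μ i :=
  stmt_2_general n Q Qhalf μ h h'0 hQhsym hQh hconv hmono hd0 S hS f hf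
end

section
/- Along the sequence generated by the non-monotone Frank-Wolfe algorithm, every iterate remains in the sublevel set L(x⁰) ∩ S, and the reference values f̄^k = max_{0≤i≤min(p,k)} f(x^{k−i}) form a non-increasing sequence converging to some limit f̄. -/
/-!
Every new value `f (x (k+1))` lies below the current reference value `f̄^k`, because the Armijo
correction terms are non-positive. Since `f̄^{k+1}` is a maximum over `f (x (k+1))` and values
already present in the window of `f̄^k`, the reference values are non-increasing; hence all
iterates stay below `f̄^0 = f (x 0)`, and `f̄` is bounded below by the lower bound of `f` on the
sublevel set, so it converges.
-/

open Finset

section WindowMax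

variable {β : Type*} [SemilatticeSup β] (p : ℕ) (u : ℕ → β)

def windowMax (k : ℕ) : β :=
  (range (min p k + 1)).sup' nonempty_range_add_one (fun i => u (k - i))

theorem le_windowMax (k : ℕ) : u k ≤ windowMax p u k :=
  le_sup' (fun i => u (k - i)) (by simp : 0 ∈ range (min p k + 1))

@[simp]
theorem windowMax_zero : windowMax p u 0 = u 0 := by
  simp [windowMax]

variable {p u}

theorem windowMax_succ_le {k : ℕ} (h : u (k + 1) ≤ windowMax p u k) :
    windowMax p u (k + 1) ≤ windowMax p u k := by
  refine sup'_le _ _ fun i hi => ?_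
  rcases i with _ | j
  · exact h
  · have hj : j ∈ range (min p k + 1) := by
      simp only [mem_range] at hi ⊢
      omega
    simpa [windowMax] using le_sup' (fun i => u (k - i)) hj

theorem antitone_windowMax (h : ∀ k, u (k + 1) ≤ windowMax p u k) :
    Antitone (windowMax p u) :=
  antitone_nat_of_succ_le fun k => windowMax_succ_le (h k)

end WindowMax

theorem stmt_10_general (n : ℕ) (S : Set (EuclideanSpace ℝ (Fin n)))
    (f : EuclideanSpace ℝ (Fin n) → ℝ)
    (p : ℕ) (x : ℕ → EuclideanSpace ℝ (Fin n)) (hxS : ∀ k, x k ∈ S)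
    (α : ℕ → ℝ) (d : ℕ → EuclideanSpace ℝ (Fin n)) (g : ℕ → ℝ)
    (γ₁ γ₂ : ℝ) (hγ₁ : γ₁ ∈ Set.Ioo (0:ℝ) (1/2)) (hγ₂ : 0 ≤ γ₂)
    (fbar : ℕ → ℝ)
    (hfbar : ∀ k, fbar k = (Finset.range (min p k + 1)).sup'
        Finset.nonempty_range_add_one (fun i => f (x (k - i))))
    (hαpos : ∀ k, 0 < α k) (hg : ∀ k, g k < 0)
    (harmijo : ∀ k, f (x (k+1)) ≤ fbar k + γ₁ * α k * g k - γ₂ * (α k)^2 * ‖d k‖^2)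
    (hbdd : ∃ m : ℝ, ∀ y ∈ {y | f y ≤ f (x 0)} ∩ S, m ≤ f y) :
    (∀ k, x k ∈ {y | f y ≤ f (x 0)} ∩ S) ∧
    (∀ k, fbar (k+1) ≤ fbar k) ∧
    (∃ fb : ℝ, Filter.Tendsto fbar Filter.atTop (nhds fb)) := by
  obtain rfl : fbar = windowMax p (fun j => f (x j)) := funext hfbar
  have hstep : ∀ k, f (x (k + 1)) ≤ windowMax p (fun j => f (x j)) k := fun k => by
    have hdescent : γ₁ * α k * g k < 0 := mul_neg_of_pos_of_neg (mul_pos hγ₁.1 (hαpos k)) (hg k)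
    have hcurv : 0 ≤ γ₂ * α k ^ 2 * ‖d k‖ ^ 2 := by positivity
    linarith [harmijo k]
  have hanti := antitone_windowMax (u := fun j => f (x j)) hstep
  have hsub : ∀ k, x k ∈ {y | f y ≤ f (x 0)} ∩ S := fun k =>
    ⟨by simpa using (le_windowMax p (fun j => f (x j)) k).trans (hanti k.zero_le), hxS k⟩
  obtain ⟨m, hm⟩ := hbdd
  have hbelow : m ∈ lowerBounds (Set.range (windowMax p fun j => f (x j))) := by
    rintro _ ⟨k, rfl⟩
    exact (hm _ (hsub k)).trans (le_windowMax p (fun j => f (x j)) k)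
  exact ⟨hsub, fun k => hanti k.le_succ, _, tendsto_atTop_ciInf hanti ⟨m, hbelow⟩⟩

/-- iterates of the non-monotone Frank-Wolfe algorithm stay in
`L(x⁰) ∩ S`, and the reference values `f̄^k` are non-increasing and converge. -/
theorem stmt_10 (n : ℕ) (S : Set (EuclideanSpace ℝ (Fin n))) (hScomp : IsCompact S)
    (f : EuclideanSpace ℝ (Fin n) → ℝ) (hfcont : ContinuousOn f S)
    (p : ℕ) (x : ℕ → EuclideanSpace ℝ (Fin n)) (hxS : ∀ k, x k ∈ S)
    (α : ℕ → ℝ) (d : ℕ → EuclideanSpace ℝ (Fin n)) (g : ℕ → ℝ)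
    (γ₁ γ₂ : ℝ) (hγ₁ : γ₁ ∈ Set.Ioo (0:ℝ) (1/2)) (hγ₂ : 0 ≤ γ₂)
    (fbar : ℕ → ℝ)
    (hfbar : ∀ k, fbar k = (Finset.range (min p k + 1)).sup'
        Finset.nonempty_range_add_one (fun i => f (x (k - i))))
    (hαpos : ∀ k, 0 < α k) (hg : ∀ k, g k < 0)
    (harmijo : ∀ k, f (x (k+1)) ≤ fbar k + γ₁ * α k * g k - γ₂ * (α k)^2 * ‖d k‖^2)
    (hbdd : ∃ m : ℝ, ∀ y ∈ {y | f y ≤ f (x 0)} ∩ S, m ≤ f y) :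
    (∀ k, x k ∈ {y | f y ≤ f (x 0)} ∩ S) ∧
    (∀ k, fbar (k+1) ≤ fbar k) ∧
    (∃ fb : ℝ, Filter.Tendsto fbar Filter.atTop (nhds fb)) :=
  stmt_10_general n S f p x hxS α d g γ₁ γ₂ hγ₁ hγ₂ fbar hfbar hαpos hg harmijo hbdd
end

section
/- If the non-monotone Frank-Wolfe algorithm produces an infinite sequence {x^k}, then the objective values f(x^k) converge to the same limit f̄ as the reference values f̄^k, i.e., lim f(x^k) = lim f̄^k = f̄. -/
/-!
Pick an index `ℓ k` where the reference value `f̄^{k+p}` is attained, so that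
`k ≤ ℓ k ≤ k + p` and `f (x (ℓ k)) = f̄^{k+p} → f̄`. Walk back from `ℓ k` one index at a time:
if `f (x (m + 1)) → f̄` along indices `m → ∞`, the sufficient decrease
`f (x (m + 1)) + γ₂ ‖x (m + 1) - x m‖² ≤ f̄^m` squeezes the step `‖x (m + 1) - x m‖` to `0`, and
uniform continuity gives `f (x m) → f̄`. Every `k` is reached from `ℓ k` in at most `p` steps.
-/

open Filter Topology Uniformity

theorem UniformContinuousOn.tendsto_dist_comp {E F ι : Type*} [PseudoMetricSpace E]
    [PseudoMetricSpace F] {f : E → F} {s : Set E} (hf : UniformContinuousOn f s)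
    {l : Filter ι} {a b : ι → E} (ha : ∀ i, a i ∈ s) (hb : ∀ i, b i ∈ s)
    (hab : Tendsto (fun i => dist (a i) (b i)) l (𝓝 0)) :
    Tendsto (fun i => dist (f (a i)) (f (b i))) l (𝓝 0) := by
  have hpair : Tendsto (fun i => (a i, b i)) l (𝓤 E ⊓ 𝓟 (s ×ˢ s)) :=
    tendsto_inf.2 ⟨tendsto_uniformity_iff_dist_tendsto_zero.2 hab,
      tendsto_principal.2 (Eventually.of_forall fun i => ⟨ha i, hb i⟩)⟩
  exact tendsto_uniformity_iff_dist_tendsto_zero.1 (Tendsto.comp hf hpair)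

/-- The reference value `f̄^k = max_{0 ≤ i ≤ min(p, k)} u (k - i)` of a nonmonotone line search. -/
def slidingMax (u : ℕ → ℝ) (p k : ℕ) : ℝ :=
  (Finset.range (min p k + 1)).sup' Finset.nonempty_range_add_one (fun i => u (k - i))

theorem exists_slidingMax_eq (u : ℕ → ℝ) (p k : ℕ) :
    ∃ j, j ≤ k ∧ k ≤ j + p ∧ slidingMax u p k = u j := by
  obtain ⟨i, hi, hmax⟩ := Finset.exists_mem_eq_sup' Finset.nonempty_range_add_one
    (fun i => u (k - i))
  rw [Finset.mem_range] at hi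
  exact ⟨k - i, Nat.sub_le k i, by omega, hmax⟩

theorem tendsto_of_tendsto_comp_sub {u : ℕ → ℝ} {a : ℝ} {p : ℕ} {φ : ℕ → ℕ}
    (hφ : ∀ k, k ≤ φ k ∧ φ k ≤ k + p)
    (h : ∀ j ≤ p, Tendsto (fun k => u (φ k - j)) atTop (𝓝 a)) :
    Tendsto u atTop (𝓝 a) := by
  rw [tendsto_iff_dist_tendsto_zero]
  have hsum : Tendsto (fun k => ∑ j ∈ Finset.range (p + 1), dist (u (φ k - j)) a) atTop (𝓝 0) := by
    simpa using tendsto_finsetSum _ fun j hj =>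
      tendsto_iff_dist_tendsto_zero.1 (h j (Nat.lt_succ_iff.1 (Finset.mem_range.1 hj)))
  refine squeeze_zero (fun k => dist_nonneg) (fun k => ?_) hsum
  have hlag : φ k - (φ k - k) = k := by have := hφ k; omega
  calc dist (u k) a = dist (u (φ k - (φ k - k))) a := by rw [hlag]
    _ ≤ _ := Finset.single_le_sum (f := fun j => dist (u (φ k - j)) a)
          (fun j _ => dist_nonneg) (Finset.mem_range.2 (by have := hφ k; omega))

section SufficientDecrease

variable {E : Type*} [PseudoMetricSpace E] {K : Set E} {f : E → ℝ} {x : ℕ → E} {p : ℕ}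
  {γ fb : ℝ}

theorem tendsto_comp_of_tendsto_comp_succ (hxK : ∀ k, x k ∈ K) (hf : UniformContinuousOn f K)
    (hγ : 0 < γ)
    (hdec : ∀ k, f (x (k + 1)) + γ * dist (x (k + 1)) (x k) ^ 2 ≤ slidingMax (f ∘ x) p k)
    (hlim : Tendsto (slidingMax (f ∘ x) p) atTop (𝓝 fb))
    {ψ : ℕ → ℕ} (hψ : Tendsto ψ atTop atTop)
    (hnext : Tendsto (fun k => f (x (ψ k + 1))) atTop (𝓝 fb)) :
    Tendsto (fun k => f (x (ψ k))) atTop (𝓝 fb) := by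
  have hgap : Tendsto (fun k => slidingMax (f ∘ x) p (ψ k) - f (x (ψ k + 1))) atTop (𝓝 0) := by
    simpa using (hlim.comp hψ).sub hnext
  have hsq : Tendsto (fun k => dist (x (ψ k + 1)) (x (ψ k)) ^ 2) atTop (𝓝 0) := by
    refine squeeze_zero (fun k => sq_nonneg _) (fun k => ?_) (by simpa using hgap.div_const γ)
    rw [le_div_iff₀' hγ]
    linarith [hdec (ψ k)]
  have hstep : Tendsto (fun k => dist (x (ψ k)) (x (ψ k + 1))) atTop (𝓝 0) := by
    simpa [dist_comm, Real.sqrt_sq dist_nonneg] using hsq.sqrt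
  have hval := hf.tendsto_dist_comp (fun k => hxK _) (fun k => hxK _) hstep
  rw [tendsto_iff_dist_tendsto_zero] at hnext ⊢
  refine squeeze_zero (fun k => dist_nonneg)
    (fun k => dist_triangle _ (f (x (ψ k + 1))) _) ?_
  simpa using hval.add hnext

theorem tendsto_of_sufficient_decrease_slidingMax (hxK : ∀ k, x k ∈ K)
    (hf : UniformContinuousOn f K) (hγ : 0 < γ)
    (hdec : ∀ k, f (x (k + 1)) + γ * dist (x (k + 1)) (x k) ^ 2 ≤ slidingMax (f ∘ x) p k)
    (hlim : Tendsto (slidingMax (f ∘ x) p) atTop (𝓝 fb)) :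
    Tendsto (f ∘ x) atTop (𝓝 fb) := by
  choose ℓ hℓk hkℓ hℓmax using fun k => exists_slidingMax_eq (f ∘ x) p (k + p)
  have hφ : ∀ k, k ≤ ℓ k ∧ ℓ k ≤ k + p := fun k => ⟨by have := hkℓ k; omega, hℓk k⟩
  refine tendsto_of_tendsto_comp_sub hφ fun j _ => ?_
  induction j with
  | zero =>
    refine (hlim.comp (tendsto_add_atTop_nat p)).congr fun k => ?_
    simp [hℓmax]
  | succ j ih =>
    refine tendsto_comp_of_tendsto_comp_succ hxK hf hγ hdec hlim ?_ ?_
    · exact tendsto_atTop_atTop.2 fun b => ⟨b + j + 1, fun k hk => by have := hφ k; omega⟩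
    · refine (ih (by omega)).congr' ?_
      filter_upwards [eventually_ge_atTop (j + 1)] with k hk
      have := hφ k
      congr 2
      omega

end SufficientDecrease

theorem stmt_11_general (n : ℕ)
    (f : EuclideanSpace ℝ (Fin n) → ℝ)
    (p : ℕ) (x : ℕ → EuclideanSpace ℝ (Fin n))
    (K : Set (EuclideanSpace ℝ (Fin n)))
    (hxK : ∀ k, x k ∈ K)
    (hfuc : UniformContinuousOn f K)
    (α : ℕ → ℝ) (d : ℕ → EuclideanSpace ℝ (Fin n)) (g : ℕ → ℝ)
    (γ₁ γ₂ : ℝ) (hγ₁ : γ₁ ∈ Set.Ioo (0:ℝ) (1/2)) (hγ₂ : 0 < γ₂)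
    (fbar : ℕ → ℝ)
    (hfbar : ∀ k, fbar k = (Finset.range (min p k + 1)).sup'
        Finset.nonempty_range_add_one (fun i => f (x (k - i))))
    (hαpos : ∀ k, 0 < α k) (hg : ∀ k, g k < 0)
    (hupd : ∀ k, x (k+1) = x k + α k • d k)
    (harmijo : ∀ k, f (x (k+1)) ≤ fbar k + γ₁ * α k * g k - γ₂ * (α k)^2 * ‖d k‖^2)
    (fb : ℝ) (hfb : Filter.Tendsto fbar Filter.atTop (nhds fb)) :
    Filter.Tendsto (fun k => f (x k)) Filter.atTop (nhds fb) := by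
  have hfbar_eq : slidingMax (f ∘ x) p = fbar := funext fun k => (hfbar k).symm
  have hstep : ∀ k, dist (x (k + 1)) (x k) = α k * ‖d k‖ := fun k => by
    rw [dist_eq_norm, hupd, add_sub_cancel_left, norm_smul, Real.norm_of_nonneg (hαpos k).le]
  refine tendsto_of_sufficient_decrease_slidingMax hxK hfuc hγ₂ (fun k => ?_) (hfbar_eq ▸ hfb)
  have hdescent : γ₁ * α k * g k < 0 := mul_neg_of_pos_of_neg (mul_pos hγ₁.1 (hαpos k)) (hg k)
  rw [hfbar_eq, hstep, mul_pow]
  linarith [harmijo k]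

/-- the objective values `f(x^k)` converge to the same limit `f̄`
as the reference values `f̄^k`. -/
theorem stmt_11 (n : ℕ) (S : Set (EuclideanSpace ℝ (Fin n))) (hScomp : IsCompact S)
    (f : EuclideanSpace ℝ (Fin n) → ℝ)
    (p : ℕ) (x : ℕ → EuclideanSpace ℝ (Fin n)) (hxS : ∀ k, x k ∈ S)
    (K : Set (EuclideanSpace ℝ (Fin n))) (hK : K = {y | f y ≤ f (x 0)} ∩ S)
    (hKcomp : IsCompact K) (hxK : ∀ k, x k ∈ K)
    (hfuc : UniformContinuousOn f K)
    (α : ℕ → ℝ) (d : ℕ → EuclideanSpace ℝ (Fin n)) (g : ℕ → ℝ)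
    (γ₁ γ₂ : ℝ) (hγ₁ : γ₁ ∈ Set.Ioo (0:ℝ) (1/2)) (hγ₂ : 0 < γ₂)
    (fbar : ℕ → ℝ)
    (hfbar : ∀ k, fbar k = (Finset.range (min p k + 1)).sup'
        Finset.nonempty_range_add_one (fun i => f (x (k - i))))
    (hαpos : ∀ k, 0 < α k) (hg : ∀ k, g k < 0)
    (hupd : ∀ k, x (k+1) = x k + α k • d k)
    (harmijo : ∀ k, f (x (k+1)) ≤ fbar k + γ₁ * α k * g k - γ₂ * (α k)^2 * ‖d k‖^2)
    (fb : ℝ) (hfb : Filter.Tendsto fbar Filter.atTop (nhds fb)) :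
    Filter.Tendsto (fun k => f (x k)) Filter.atTop (nhds fb) :=
  stmt_11_general n f p x K hxK hfuc α d g γ₁ γ₂ hγ₁ hγ₂ fbar hfbar hαpos hg hupd harmijo fb hfb
end

section
/- Under the assumptions of the non-monotone Frank-Wolfe convergence analysis, the directional derivatives along the chosen directions vanish asymptotically: lim_{k→∞} ∇f(x^k)ᵀd^k = 0. -/
/-!
Since `f (x k)` and `fbar k` have the same limit, the Armijo condition forces `α k * g k → 0`,
so the steps vanish along any set of indices on which `g k` stays below a negative level. It
therefore suffices to show `g k → 0` along any filter on which `α k → 0`. There the steps are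
eventually shorter than `β`, so the trial step `α k / δ` was rejected, and the mean value theorem
turns that rejection into
`(1 - γ₁) (-g k) < γ₂ (α k / δ) ‖d k‖² + ‖Df(x k + c d k) - Df(x k)‖ ‖d k‖` for some
`c ∈ (0, α k / δ)`. The right-hand side tends to `0` because `Df` is uniformly continuous near
the compact set `K`.
-/

open Filter Topology Uniformity

theorem IsCompact.tendsto_sub_of_tendsto_zero {E G ι : Type*} [SeminormedAddCommGroup E]
    [SeminormedAddCommGroup G] {F : E → G} (hF : Continuous F) {K : Set E} (hK : IsCompact K)
    {l : Filter ι} {x h : ι → E} (hx : ∀ᶠ i in l, x i ∈ K) (hh : Tendsto h l (𝓝 0)) :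
    Tendsto (fun i => F (x i + h i) - F (x i)) l (𝓝 0) := by
  have hpair : Tendsto (fun i => (x i, x i + h i)) l (𝓤 E) := by
    rw [tendsto_uniformity_iff_dist_tendsto_zero]
    simpa [dist_eq_norm] using hh.norm
  rw [Metric.tendsto_nhds]
  intro ε hε
  have hU := hK.uniformContinuousAt_of_continuousAt F (fun a _ => hF.continuousAt)
    (Metric.dist_mem_uniformity hε)
  filter_upwards [hpair hU, hx] with i hi hxi
  simpa [dist_eq_norm, norm_sub_rev] using hi hxi

theorem tendsto_mul_of_nonmonotone_armijo {F Fbar a g : ℕ → ℝ} {γ L : ℝ} (hγ : 0 < γ)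
    (ha : ∀ k, 0 ≤ a k) (hg : ∀ k, g k ≤ 0)
    (hdesc : ∀ k, F (k + 1) ≤ Fbar k + γ * a k * g k)
    (hF : Tendsto F atTop (𝓝 L)) (hFbar : Tendsto Fbar atTop (𝓝 L)) :
    Tendsto (fun k => a k * g k) atTop (𝓝 0) := by
  have hgap : Tendsto (fun k => (Fbar k - F (k + 1)) / γ) atTop (𝓝 0) := by
    simpa using (hFbar.sub (hF.comp (tendsto_add_atTop_nat 1))).div_const γ
  have hneg : Tendsto (fun k => -(a k * g k)) atTop (𝓝 0) := by
    refine squeeze_zero (fun k => ?_) (fun k => ?_) hgap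
    · nlinarith [ha k, hg k]
    · rw [le_div_iff₀ hγ]
      linarith [hdesc k]
  simpa using hneg.neg

theorem tendsto_zero_of_tendsto_mul_of_forall_le_atTop {a g : ℕ → ℝ} (ha : ∀ k, 0 ≤ a k)
    (hg : ∀ k, g k ≤ 0) (hag : Tendsto (fun k => a k * g k) atTop (𝓝 0))
    (hsmall : ∀ l ≤ atTop, Tendsto a l (𝓝 0) → Tendsto g l (𝓝 0)) :
    Tendsto g atTop (𝓝 0) := by
  refine tendsto_order.2 ⟨fun b hb => ?_, fun b hb => .of_forall fun k => (hg k).trans_lt hb⟩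
  set l := atTop ⊓ 𝓟 {k | g k ≤ b}
  have hgb : ∀ᶠ k in l, g k ≤ b := mem_inf_of_right (mem_principal_self _)
  have ha_l : Tendsto a l (𝓝 0) := by
    refine squeeze_zero' (.of_forall ha) (hgb.mono fun k hk => ?_)
      (by simpa using (hag.mono_left inf_le_left).div_const b)
    rw [le_div_iff_of_neg hb]
    exact mul_le_mul_of_nonneg_left hk (ha k)
  have hempty : ∀ᶠ k in l, False := by
    filter_upwards [(hsmall l inf_le_left ha_l).eventually (lt_mem_nhds hb), hgb] with k hbg hgb
    linarith
  exact (eventually_inf_principal.1 hempty).mono fun k hk => lt_of_not_ge hk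

section LineSearch

variable {E : Type*} [NormedAddCommGroup E] [NormedSpace ℝ E] {f : E → ℝ}

theorem exists_lt_fderiv_apply_of_lt (hf : Differentiable ℝ f) {x d : E} {t m : ℝ} (ht : 0 < t)
    (h : f x + t * m < f (x + t • d)) :
    ∃ c ∈ Set.Ioo 0 t, m < fderiv ℝ f (x + c • d) d := by
  have hline : ∀ s : ℝ, HasDerivAt (fun s : ℝ => f (x + s • d)) (fderiv ℝ f (x + s • d) d) s :=
    fun s => (hf _).hasFDerivAt.comp_hasDerivAt s
      (((hasDerivAt_id s).smul_const d).const_add x |>.congr_deriv (one_smul ℝ d))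
  obtain ⟨c, hc, hslope⟩ := exists_hasDerivAt_eq_slope (fun s : ℝ => f (x + s • d)) _ ht
    (fun s _ => (hline s).continuousAt.continuousWithinAt) (fun s _ => hline s)
  refine ⟨c, hc, ?_⟩
  rw [hslope, zero_smul, add_zero, sub_zero, lt_div_iff₀ ht]
  linarith

theorem exists_slope_bound_of_armijo_fail (hf : Differentiable ℝ f) {x d : E}
    {fb γ₁ γ₂ t : ℝ} (ht : 0 < t) (hfx : f x ≤ fb)
    (hfail : fb + γ₁ * t * fderiv ℝ f x d - γ₂ * t ^ 2 * ‖d‖ ^ 2 < f (x + t • d)) :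
    ∃ c ∈ Set.Ioo 0 t, (1 - γ₁) * -fderiv ℝ f x d <
      γ₂ * t * ‖d‖ ^ 2 + ‖fderiv ℝ f (x + c • d) - fderiv ℝ f x‖ * ‖d‖ := by
  obtain ⟨c, hc, hlt⟩ := exists_lt_fderiv_apply_of_lt hf ht
    (m := γ₁ * fderiv ℝ f x d - γ₂ * t * ‖d‖ ^ 2) (by linarith)
  refine ⟨c, hc, ?_⟩
  have hdiff := (fderiv ℝ f (x + c • d) - fderiv ℝ f x).le_opNorm d
  have := le_abs_self ((fderiv ℝ f (x + c • d) - fderiv ℝ f x) d)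
  simp only [sub_apply, Real.norm_eq_abs] at hdiff this
  linarith

theorem tendsto_backtracking_error {ι : Type*} (hf : ContDiff ℝ 1 f) {K : Set E}
    (hK : IsCompact K) {l : Filter ι} {x d : ι → E} {t c : ι → ℝ} {D γ₂ : ℝ}
    (hx : ∀ᶠ i in l, x i ∈ K) (hd : ∀ i, ‖d i‖ ≤ D)
    (ht : Tendsto t l (𝓝 0)) (hc : ∀ᶠ i in l, c i ∈ Set.Ioo 0 (t i)) :
    Tendsto (fun i => γ₂ * t i * ‖d i‖ ^ 2 +
      ‖fderiv ℝ f (x i + c i • d i) - fderiv ℝ f (x i)‖ * ‖d i‖) l (𝓝 0) := by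
  have hd_bdd : IsBoundedUnder (· ≤ ·) l ((‖·‖) ∘ fun i => ‖d i‖) :=
    isBoundedUnder_of ⟨D, fun i => by simpa using hd i⟩
  have hd_sq_bdd : IsBoundedUnder (· ≤ ·) l ((‖·‖) ∘ fun i => ‖d i‖ ^ 2) :=
    isBoundedUnder_of ⟨D ^ 2, fun i => by
      simpa using pow_le_pow_left₀ (norm_nonneg _) (hd i) 2⟩
  have hc0 : Tendsto c l (𝓝 0) :=
    squeeze_zero' (hc.mono fun i hi => hi.1.le) (hc.mono fun i hi => hi.2.le) ht
  have hcd : Tendsto (fun i => c i • d i) l (𝓝 0) :=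
    hc0.zero_smul_isBoundedUnder_le (isBoundedUnder_of ⟨D, hd⟩)
  have hΔ := hK.tendsto_sub_of_tendsto_zero (hf.continuous_fderiv one_ne_zero) hx hcd
  have hγ₂t : Tendsto (fun i => γ₂ * t i) l (𝓝 0) := by simpa using ht.const_mul γ₂
  simpa using (hγ₂t.zero_mul_isBoundedUnder_le hd_sq_bdd).add
    ((tendsto_zero_iff_norm_tendsto_zero.1 hΔ).zero_mul_isBoundedUnder_le hd_bdd)

end LineSearch

theorem stmt_12_general (n : ℕ)
    (f : EuclideanSpace ℝ (Fin n) → ℝ) (hfC1 : ContDiff ℝ 1 f)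
    (p : ℕ) (x : ℕ → EuclideanSpace ℝ (Fin n))
    (K : Set (EuclideanSpace ℝ (Fin n)))
    (hKcomp : IsCompact K) (hxK : ∀ k, x k ∈ K)
    (d : ℕ → EuclideanSpace ℝ (Fin n)) (hdbdd : ∃ D : ℝ, ∀ k, ‖d k‖ ≤ D)
    (g : ℕ → ℝ) (hgdef : ∀ k, g k = fderiv ℝ f (x k) (d k)) (hg : ∀ k, g k < 0)
    (γ₁ γ₂ δ β : ℝ) (hγ₁ : γ₁ ∈ Set.Ioo (0:ℝ) (1/2)) (hγ₂ : 0 ≤ γ₂)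
    (hδ : δ ∈ Set.Ioo (0:ℝ) 1) (hβ : 0 < β)
    (α αmax : ℕ → ℝ) (hαmax : ∀ k, β ≤ αmax k)
    (hα : ∀ k, 0 < α k ∧ α k ≤ αmax k)
    (fbar : ℕ → ℝ)
    (hfbar : ∀ k, fbar k = (Finset.range (min p k + 1)).sup'
        Finset.nonempty_range_add_one (fun i => f (x (k - i))))
    (harmijo : ∀ k, f (x (k+1)) ≤ fbar k + γ₁ * α k * g k - γ₂ * (α k)^2 * ‖d k‖^2)
    (hfail : ∀ k, α k < αmax k →
      fbar k + γ₁ * (α k / δ) * g k - γ₂ * (α k / δ)^2 * ‖d k‖^2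
        < f (x k + (α k / δ) • d k))
    (fb : ℝ) (hfb : Filter.Tendsto fbar Filter.atTop (nhds fb))
    (hfx : Filter.Tendsto (fun k => f (x k)) Filter.atTop (nhds fb)) :
    Filter.Tendsto g Filter.atTop (nhds 0) := by
  obtain ⟨D, hD⟩ := hdbdd
  have hf : Differentiable ℝ f := hfC1.differentiable one_ne_zero
  have hfx_le : ∀ k, f (x k) ≤ fbar k := fun k => by
    rw [hfbar k]
    exact Finset.le_sup' (fun i => f (x (k - i))) (Finset.mem_range.2 (Nat.succ_pos _))
  have hαg : Tendsto (fun k => α k * g k) atTop (𝓝 0) :=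
    tendsto_mul_of_nonmonotone_armijo (F := fun k => f (x k)) hγ₁.1 (fun k => (hα k).1.le)
      (fun k => (hg k).le) (fun k => by nlinarith [harmijo k, hγ₂, sq_nonneg (α k * ‖d k‖)])
      hfx hfb
  have hbacktrack : ∀ k, ∃ c, α k < αmax k → c ∈ Set.Ioo 0 (α k / δ) ∧
      (1 - γ₁) * -g k < γ₂ * (α k / δ) * ‖d k‖ ^ 2 +
        ‖fderiv ℝ f (x k + c • d k) - fderiv ℝ f (x k)‖ * ‖d k‖ := fun k => by
    by_cases hk : α k < αmax k
    · have hfail_k := hfail k hk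
      rw [hgdef k] at hfail_k ⊢
      obtain ⟨c, hc, hlt⟩ :=
        exists_slope_bound_of_armijo_fail hf (div_pos (hα k).1 hδ.1) (hfx_le k) hfail_k
      exact ⟨c, fun _ => ⟨hc, hlt⟩⟩
    · exact ⟨0, fun h => absurd h hk⟩
  choose c hc using hbacktrack
  refine tendsto_zero_of_tendsto_mul_of_forall_le_atTop (fun k => (hα k).1.le)
    (fun k => (hg k).le) hαg fun l _ hαl => ?_
  have hback : ∀ᶠ k in l, α k < αmax k :=
    (hαl.eventually (gt_mem_nhds hβ)).mono fun k hk => hk.trans_le (hαmax k)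
  have herr := tendsto_backtracking_error (γ₂ := γ₂) hfC1 hKcomp (.of_forall hxK) hD
    (by simpa using hαl.div_const δ) (hback.mono fun k hk => (hc k hk).1)
  have hγ₁_lt_one : 0 < 1 - γ₁ := by linarith [hγ₁.2]
  have hneg : Tendsto (fun k => -g k) l (𝓝 0) := by
    refine squeeze_zero' (.of_forall fun k => (neg_pos.2 (hg k)).le) (hback.mono fun k hk => ?_)
      (by simpa using herr.div_const (1 - γ₁))
    rw [le_div_iff₀' hγ₁_lt_one]
    exact (hc k hk).2.le
  simpa using hneg.neg

/-- the directional derivatives along the chosen Frank-Wolfe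
directions vanish asymptotically: `∇f(x^k)ᵀd^k → 0`. -/
theorem stmt_12 (n : ℕ) (S : Set (EuclideanSpace ℝ (Fin n))) (hScomp : IsCompact S)
    (f : EuclideanSpace ℝ (Fin n) → ℝ) (hfC1 : ContDiff ℝ 1 f)
    (p : ℕ) (x : ℕ → EuclideanSpace ℝ (Fin n)) (hxS : ∀ k, x k ∈ S)
    (K : Set (EuclideanSpace ℝ (Fin n))) (hK : K = {y | f y ≤ f (x 0)} ∩ S)
    (hKcomp : IsCompact K) (hxK : ∀ k, x k ∈ K)
    (d : ℕ → EuclideanSpace ℝ (Fin n)) (hdbdd : ∃ D : ℝ, ∀ k, ‖d k‖ ≤ D)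
    (g : ℕ → ℝ) (hgdef : ∀ k, g k = fderiv ℝ f (x k) (d k)) (hg : ∀ k, g k < 0)
    (γ₁ γ₂ δ β : ℝ) (hγ₁ : γ₁ ∈ Set.Ioo (0:ℝ) (1/2)) (hγ₂ : 0 ≤ γ₂)
    (hδ : δ ∈ Set.Ioo (0:ℝ) 1) (hβ : 0 < β)
    (α αmax : ℕ → ℝ) (hαmax : ∀ k, β ≤ αmax k)
    (hα : ∀ k, 0 < α k ∧ α k ≤ αmax k)
    (hupd : ∀ k, x (k+1) = x k + α k • d k)
    (fbar : ℕ → ℝ)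
    (hfbar : ∀ k, fbar k = (Finset.range (min p k + 1)).sup'
        Finset.nonempty_range_add_one (fun i => f (x (k - i))))
    (harmijo : ∀ k, f (x (k+1)) ≤ fbar k + γ₁ * α k * g k - γ₂ * (α k)^2 * ‖d k‖^2)
    (hfail : ∀ k, α k < αmax k →
      fbar k + γ₁ * (α k / δ) * g k - γ₂ * (α k / δ)^2 * ‖d k‖^2
        < f (x k + (α k / δ) • d k))
    (fb : ℝ) (hfb : Filter.Tendsto fbar Filter.atTop (nhds fb))
    (hfx : Filter.Tendsto (fun k => f (x k)) Filter.atTop (nhds fb)) :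
    Filter.Tendsto g Filter.atTop (nhds 0) :=
  stmt_12_general n f hfC1 p x K hKcomp hxK d hdbdd g hgdef hg γ₁ γ₂ δ β hγ₁ hγ₂ hδ hβ α αmax hαmax
    hα fbar hfbar harmijo hfail fb hfb hfx
end

section
/- Let {x^k} ⊂ S be a sequence with directions d^k satisfying ∇f(x^k)ᵀd^k ≤ ∇f(x^k)ᵀ(x − x^k) for all x ∈ S, and suppose ∇f(x^k)ᵀd^k → 0. Then every limit point x* of {x^k} satisfies the first-order optimality condition ∇f(x*)ᵀ(x − x*) ≥ 0 for all x ∈ S; if f is convex on S, x* is a global minimizer of f over S. -/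
/-!
Along a subsequence converging to `x*`, the Frank-Wolfe inequality
`∇f(xᵏ)ᵀdᵏ ≤ ∇f(xᵏ)ᵀ(y - xᵏ)` passes to the limit: the left side tends to `0` by assumption
and the right side to `∇f(x*)ᵀ(y - x*)` by continuity of `∇f`. For convex `f`, the gradient
inequality `f x* + ∇f(x*)ᵀ(y - x*) ≤ f y`, obtained from the one-variable slope inequality on
the segment `[x*, y]`, turns this stationarity into global optimality.
-/

open Filter Topology

theorem le_of_mapClusterPt_of_tendsto {X α : Type*} [TopologicalSpace X] [FirstCountableTopology X]
    [TopologicalSpace α] [Preorder α] [OrderClosedTopology α]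
    {u : ℕ → X} {a : ℕ → α} {g : X → α} {p : X} {l : α}
    (hu : MapClusterPt p atTop u) (ha : Tendsto a atTop (𝓝 l)) (hg : ContinuousAt g p)
    (hle : ∀ k, a k ≤ g (u k)) : l ≤ g p := by
  obtain ⟨ψ, hψ, hψu⟩ := hu.tendsto_subseq
  exact le_of_tendsto_of_tendsto (ha.comp hψ.tendsto_atTop) (hg.tendsto.comp hψu)
    (Eventually.of_forall fun k => hle (ψ k))

section Normed

variable {E : Type*} [NormedAddCommGroup E] [NormedSpace ℝ E]

theorem ConvexOn.add_apply_sub_le_of_hasFDerivAt {s : Set E} {f : E → ℝ} {f' : E →L[ℝ] ℝ}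
    {x y : E} (hf : ConvexOn ℝ s f) (hx : x ∈ s) (hy : y ∈ s) (hf' : HasFDerivAt f f' x) :
    f x + f' (y - x) ≤ f y := by
  set g : ℝ →ᵃ[ℝ] E := AffineMap.lineMap x y
  have hg : Set.MapsTo g (Set.Icc 0 1) s := fun t ht => hf.1.lineMap_mem hx hy ht
  have hconv : ConvexOn ℝ (Set.Icc 0 1) (f ∘ g) :=
    (hf.comp_affineMap g).subset hg (convex_Icc 0 1)
  have hderiv : HasDerivAt (f ∘ g) (f' (y - x)) 0 := by
    have hf'0 : HasFDerivAt f f' (g 0) := by simpa [g] using hf'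
    exact hf'0.comp_hasDerivAt 0 AffineMap.hasDerivAt_lineMap
  have hslope := hconv.le_slope_of_hasDerivAt (by simp) (by simp) zero_lt_one hderiv
  simp only [slope_def_field, Function.comp_apply, g, AffineMap.lineMap_apply_zero,
    AffineMap.lineMap_apply_one, sub_zero, div_one] at hslope
  linarith

theorem fderiv_apply_sub_nonneg_of_mapClusterPt {f : E → ℝ} {x d : ℕ → E} {xstar y : E}
    (hf : ContinuousAt (fderiv ℝ f) xstar) (hx : MapClusterPt xstar atTop x)
    (hd : ∀ k, fderiv ℝ f (x k) (d k) ≤ fderiv ℝ f (x k) (y - x k))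
    (hgap : Tendsto (fun k => fderiv ℝ f (x k) (d k)) atTop (𝓝 0)) :
    0 ≤ fderiv ℝ f xstar (y - xstar) :=
  le_of_mapClusterPt_of_tendsto (g := fun p => fderiv ℝ f p (y - p)) hx hgap
    (hf.clm_apply (continuousAt_const.sub continuousAt_id)) hd

end Normed

theorem stmt_13_general (n : ℕ) (S : Set (EuclideanSpace ℝ (Fin n)))
    (hScomp : IsCompact S)
    (f : EuclideanSpace ℝ (Fin n) → ℝ) (hfC1 : ContDiff ℝ 1 f)
    (x : ℕ → EuclideanSpace ℝ (Fin n)) (hxS : ∀ k, x k ∈ S)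
    (d : ℕ → EuclideanSpace ℝ (Fin n))
    (hFW : ∀ k, ∀ y ∈ S, fderiv ℝ f (x k) (d k) ≤ fderiv ℝ f (x k) (y - x k))
    (hgap : Filter.Tendsto (fun k => fderiv ℝ f (x k) (d k)) Filter.atTop (nhds 0)) :
    ∀ xstar : EuclideanSpace ℝ (Fin n), MapClusterPt xstar Filter.atTop x →
      (∀ y ∈ S, 0 ≤ fderiv ℝ f xstar (y - xstar)) ∧
      (ConvexOn ℝ S f → ∀ y ∈ S, f xstar ≤ f y) := by
  intro xstar hcl
  have hxstar : xstar ∈ S :=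
    hScomp.isClosed.mem_of_mapClusterPt hcl (Eventually.of_forall hxS)
  have hstat : ∀ y ∈ S, 0 ≤ fderiv ℝ f xstar (y - xstar) := fun y hy =>
    fderiv_apply_sub_nonneg_of_mapClusterPt (hfC1.continuous_fderiv one_ne_zero).continuousAt
      hcl (fun k => hFW k y hy) hgap
  refine ⟨hstat, fun hconv y hy => ?_⟩
  have hgrad := hconv.add_apply_sub_le_of_hasFDerivAt hxstar hy
    ((hfC1.differentiable one_ne_zero) xstar).hasFDerivAt
  linarith [hstat y hy]

/-- if the Frank-Wolfe gaps vanish, every limit point `x*` of the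
iterates satisfies the first-order optimality condition over `S`; if `f` is
convex on `S`, then `x*` is a global minimizer of `f` over `S`. -/
theorem stmt_13 (n : ℕ) (S : Set (EuclideanSpace ℝ (Fin n)))
    (hScomp : IsCompact S) (hSconv : Convex ℝ S)
    (f : EuclideanSpace ℝ (Fin n) → ℝ) (hfC1 : ContDiff ℝ 1 f)
    (x : ℕ → EuclideanSpace ℝ (Fin n)) (hxS : ∀ k, x k ∈ S)
    (d : ℕ → EuclideanSpace ℝ (Fin n)) (hdbdd : ∃ D : ℝ, ∀ k, ‖d k‖ ≤ D)
    (hFW : ∀ k, ∀ y ∈ S, fderiv ℝ f (x k) (d k) ≤ fderiv ℝ f (x k) (y - x k))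
    (hgap : Filter.Tendsto (fun k => fderiv ℝ f (x k) (d k)) Filter.atTop (nhds 0)) :
    ∀ xstar : EuclideanSpace ℝ (Fin n), MapClusterPt xstar Filter.atTop x →
      (∀ y ∈ S, 0 ≤ fderiv ℝ f xstar (y - xstar)) ∧
      (ConvexOn ℝ S f → ∀ y ∈ S, f xstar ≤ f y) :=
  stmt_13_general n S hScomp f hfC1 x hxS d hFW hgap
end
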